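/- arXiv:1601.04380 — 6 statements merged into one kernel-verified Lean document; each statement's English description precedes it below -/
import Mathlib

section
/- For every n ≥ 1 and every real ζ with U'_{2n-1}(ζ) = 0, one has T_{2n+1}(ζ) = U_{2n-1}(ζ) * (ζ^2 * (1 + 1/(2n)) - 1). -/
open Polynomial Polynomial.Chebyshev

/-! At a critical point `ζ` of `U_m`, the identity `(m + 1) T_{m+1} = X U_m - (1 - X²) U_m'` gives
`(m + 1) T_{m+1}(ζ) = ζ U_m(ζ)`; substituting this into the recurrence
`T_{m+2} = X T_{m+1} - (1 - X²) U_m` expresses `T_{m+2}(ζ)` as a multiple of `U_m(ζ)`. -/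

namespace Polynomial.Chebyshev

variable {R : Type*} [CommRing R]

theorem add_one_mul_eval_T_of_eval_derivative_U_eq_zero (m : ℤ) {x : R}
    (hx : (derivative (U R m)).eval x = 0) :
    ((m : R) + 1) * (T R (m + 1)).eval x = x * (U R m).eval x := by
  simpa [hx] using congrArg (eval x) (add_one_mul_T_eq_poly_in_U (R := R) m)

theorem add_one_mul_eval_T_add_two_of_eval_derivative_U_eq_zero (m : ℤ) {x : R}
    (hx : (derivative (U R m)).eval x = 0) :
    ((m : R) + 1) * (T R (m + 2)).eval x = (U R m).eval x * (((m : R) + 2) * x ^ 2 - (m + 1)) := by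
  have hT₁ := add_one_mul_eval_T_of_eval_derivative_U_eq_zero m hx
  have hT₂ : (T R (m + 2)).eval x = x * (T R (m + 1)).eval x - (1 - x ^ 2) * (U R m).eval x := by
    simpa using congrArg (eval x) (T_eq_X_mul_T_sub_pol_U R m)
  linear_combination (m + 1 : R) * hT₂ + x * hT₁

end Polynomial.Chebyshev

/-- If `ζ` is a critical point of `U₂ₙ₋₁`, then
`T₂ₙ₊₁(ζ) = U₂ₙ₋₁(ζ) (ζ²(1 + 1/(2n)) - 1)`. -/
theorem chebyshev_critical_point_T_identity (n : ℕ) (hn : 1 ≤ n) (ζ : ℝ)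
    (hζ : (derivative (U ℝ (2 * n - 1))).eval ζ = 0) :
    (T ℝ (2 * n + 1)).eval ζ =
      (U ℝ (2 * n - 1)).eval ζ * (ζ ^ 2 * (1 + 1 / (2 * (n : ℝ))) - 1) := by
  have hn₀ : (n : ℝ) ≠ 0 := by exact_mod_cast Nat.one_le_iff_ne_zero.mp hn
  have key := add_one_mul_eval_T_add_two_of_eval_derivative_U_eq_zero (2 * n - 1) hζ
  rw [show (2 * (n : ℤ) - 1 + 2) = 2 * n + 1 by ring] at key
  push_cast at key
  field_simp
  linear_combination key
end

section
/- For every n ≥ 1 and every real ζ with U'_{2n-1}(ζ) = 0 and U_{2n-1}(ζ) ≠ 0, -T_{2n+1}(ζ)/((2n+1) U_{2n-1}(ζ)) - T_{2n-1}(ζ)/((2n-1) U_{2n-1}(ζ)) + ζ^2 = ζ^2 - 2/((2n+1)(2n-1)). -/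
open Polynomial Polynomial.Chebyshev

/-! Eliminating `T_{m+1}` between the three-term recurrence, `T_{m+2} = X T_{m+1} - (1 - X²) U_m`,
and `(m+1) T_{m+1} = X U_m - (1 - X²) U_m'` gives the polynomial identity
`m T_{m+2} + (m+2) T_m = 2 U_m - 2X(1 - X²) U_m'`. At a critical point `ζ` of `U_m` the
derivative term vanishes, and dividing by `m (m+2) U_m(ζ)` yields the formula with `m = 2n - 1`. -/

namespace Polynomial.Chebyshev

theorem intCast_mul_T_add_two_add_mul_T (R : Type*) [CommRing R] (m : ℤ) :
    (m : R[X]) * T R (m + 2) + ((m : R[X]) + 2) * T R m =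
      2 * U R m - 2 * X * (1 - X ^ 2) * derivative (U R m) := by
  linear_combination ((m : R[X]) + 2) * T_add_two R m -
    2 * T_eq_X_mul_T_sub_pol_U R m + 2 * X * add_one_mul_T_eq_poly_in_U (R := R) m

theorem intCast_mul_eval_T_add_two_add_mul_eval_T_of_isCritical {R : Type*} [CommRing R]
    (m : ℤ) {ζ : R} (hζ : (derivative (U R m)).eval ζ = 0) :
    m * (T R (m + 2)).eval ζ + (m + 2) * (T R m).eval ζ = 2 * (U R m).eval ζ := by
  simpa [hζ] using congr_arg (eval ζ) (intCast_mul_T_add_two_add_mul_T R m)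

theorem eval_T_add_two_div_add_eval_T_div_of_isCritical {K : Type*} [Field K] (m : ℤ) {ζ : K}
    (hm : (m : K) ≠ 0) (hm₂ : (m : K) + 2 ≠ 0) (hζ : (derivative (U K m)).eval ζ = 0)
    (hU : (U K m).eval ζ ≠ 0) :
    (T K (m + 2)).eval ζ / ((m + 2) * (U K m).eval ζ) + (T K m).eval ζ / (m * (U K m).eval ζ) =
      2 / ((m + 2) * m) := by
  rw [div_add_div _ _ (mul_ne_zero hm₂ hU) (mul_ne_zero hm hU), div_eq_div_iff
    (mul_ne_zero (mul_ne_zero hm₂ hU) (mul_ne_zero hm hU)) (mul_ne_zero hm₂ hm)]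
  linear_combination (m + 2) * m * (U K m).eval ζ *
    intCast_mul_eval_T_add_two_add_mul_eval_T_of_isCritical m hζ

end Polynomial.Chebyshev

theorem jeff_root_formula_general (n : ℕ) (ζ : ℝ)
    (hζ : (derivative (U ℝ (2 * n - 1))).eval ζ = 0)
    (hU : (U ℝ (2 * n - 1)).eval ζ ≠ 0) :
    -(T ℝ (2 * n + 1)).eval ζ / ((2 * (n : ℝ) + 1) * (U ℝ (2 * n - 1)).eval ζ) -
        (T ℝ (2 * n - 1)).eval ζ / ((2 * (n : ℝ) - 1) * (U ℝ (2 * n - 1)).eval ζ) + ζ ^ 2 =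
      ζ ^ 2 - 2 / ((2 * (n : ℝ) + 1) * (2 * (n : ℝ) - 1)) := by
  have h_odd : ((2 * n - 1 : ℤ) : ℝ) ≠ 0 := by exact_mod_cast (by omega : (2 * n - 1 : ℤ) ≠ 0)
  have h_odd₂ : ((2 * n - 1 : ℤ) : ℝ) + 2 ≠ 0 := by push_cast; ring_nf; positivity
  have h := eval_T_add_two_div_add_eval_T_div_of_isCritical _ h_odd h_odd₂ hζ hU
  push_cast at h
  rw [show (2 * n - 1 + 2 : ℤ) = 2 * n + 1 by ring, show (2 * n - 1 + 2 : ℝ) = 2 * n + 1 by ring] at h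
  linear_combination -h

/-- The roots of the Jeff polynomial: at a critical point `ζ` of `U₂ₙ₋₁` with
`U₂ₙ₋₁(ζ) ≠ 0`, the given combination equals `ζ² - 2/((2n+1)(2n-1))`. -/
theorem jeff_root_formula (n : ℕ) (hn : 1 ≤ n) (ζ : ℝ)
    (hζ : (derivative (U ℝ (2 * n - 1))).eval ζ = 0)
    (hU : (U ℝ (2 * n - 1)).eval ζ ≠ 0) :
    -(T ℝ (2 * n + 1)).eval ζ / ((2 * (n : ℝ) + 1) * (U ℝ (2 * n - 1)).eval ζ) -
        (T ℝ (2 * n - 1)).eval ζ / ((2 * (n : ℝ) - 1) * (U ℝ (2 * n - 1)).eval ζ) + ζ ^ 2 =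
      ζ ^ 2 - 2 / ((2 * (n : ℝ) + 1) * (2 * (n : ℝ) - 1)) :=
  jeff_root_formula_general n ζ hζ hU
end

section
/- For every n ≥ 1, the polynomial (2n-1) * T_{2n+1}(x) + (2n+1) * T_{2n-1}(x) is divisible by x^3, i.e., x^3 divides (2n-1) T_{2n+1} + (2n+1) T_{2n-1} in the polynomial ring over ℚ. -/
/-!
In characteristic zero, `X ^ 3 ∣ p` means that `p`, `p'` and `p''` vanish at `0`.
For odd `k = 2m + 1` the polynomial `T_k` is odd, so `T_k(0) = T_k''(0) = 0` (the latter from the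
Chebyshev differential equation `(1 - x²) T_k'' = x T_k' - k² T_k`), while
`T_k'(0) = k U_{k-1}(0) = (-1)^m k`. The two first-order terms `(2n-1)(2n+1)(-1)^n` and
`(2n+1)(2n-1)(-1)^(n-1)` then cancel.
-/

open Polynomial Polynomial.Chebyshev

namespace Polynomial

theorem X_pow_dvd_iff_iterate_derivative_eval_zero {R : Type*} [CommRing R] [IsAddTorsionFree R]
    {p : R[X]} {n : ℕ} : X ^ n ∣ p ↔ ∀ k < n, (derivative^[k] p).eval 0 = 0 := by
  refine X_pow_dvd_iff.trans (forall₂_congr fun k _ ↦ ?_)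
  rw [← coeff_zero_eq_eval_zero, coeff_iterate_derivative, zero_add, Nat.descFactorial_self,
    nsmul_eq_zero_iff_right (Nat.factorial_ne_zero k)]

namespace Chebyshev

variable {R : Type*} [CommRing R]

theorem derivative_T_two_mul_add_one_eval_zero (m : ℤ) :
    (derivative (T R (2 * m + 1))).eval 0 = (2 * m + 1) * m.negOnePow := by
  rw [T_derivative_eq_U, add_sub_cancel_right, eval_mul, U_eval_two_mul_zero]
  simp

theorem iterate_derivative_two_T_eval_zero_of_odd {n : ℤ} (hn : Odd n) :
    (derivative^[2] (T R n)).eval 0 = 0 := by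
  simpa [hn] using iterate_derivative_T_eval_zero_recurrence (R := R) n 0

end Chebyshev
end Polynomial

theorem X_cubed_dvd_mutt_numerator_general (n : ℕ) :
    (X : ℚ[X]) ^ 3 ∣
      (2 * (n : ℚ[X]) - 1) * T ℚ (2 * n + 1) + (2 * (n : ℚ[X]) + 1) * T ℚ (2 * n - 1) := by
  have hodd (m : ℤ) : Odd (2 * m + 1) := odd_two_mul_add_one m
  rw [show (2 * n - 1 : ℤ) = 2 * (n - 1) + 1 by ring,
    show (2 * (n : ℚ[X]) - 1) = C (2 * n - 1 : ℚ) by simp [map_ofNat],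
    show (2 * (n : ℚ[X]) + 1) = C (2 * n + 1 : ℚ) by simp [map_ofNat],
    X_pow_dvd_iff_iterate_derivative_eval_zero]
  intro k hk
  simp only [iterate_map_add, iterate_derivative_C_mul, eval_add, eval_C_mul]
  interval_cases k
  · simp only [Function.iterate_zero_apply, T_eval_zero_of_odd ℚ (hodd _), mul_zero, add_zero]
  · simp only [Function.iterate_one, derivative_T_two_mul_add_one_eval_zero, Int.negOnePow_sub,
      Int.negOnePow_one]
    push_cast
    ring
  · simp only [iterate_derivative_two_T_eval_zero_of_odd (hodd _), mul_zero, add_zero]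

/-- `x³` divides `(2n-1) T₂ₙ₊₁ + (2n+1) T₂ₙ₋₁` over ℚ. -/
theorem X_cubed_dvd_mutt_numerator (n : ℕ) (hn : 1 ≤ n) :
    (X : ℚ[X]) ^ 3 ∣
      (2 * (n : ℚ[X]) - 1) * T ℚ (2 * n + 1) + (2 * (n : ℚ[X]) + 1) * T ℚ (2 * n - 1) :=
  X_cubed_dvd_mutt_numerator_general n
end

section
/- Let p_n(x) be polynomials satisfying p_n(x) = (a_n x + b_n) p_{n-1}(x) - c_n p_{n-2}(x) with p_0 = 1, p_1(x) = a_1 x + b_1, and suppose a_1 a_n c_n ≠ 0 for all n > 1 and p_n has n roots x_1,…,x_n (with multiplicity) in the field. Then ∏_{i=1}^n p_{n-1}(x_i) = (-1)^{n(n-1)/2} ∏_{j=1}^n a_j^{n-2j+1} c_j^{j-1}. -/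
/-!
Let `ℓₘ = a₁ ⋯ aₘ` be the leading coefficient of `pₘ` and `Rₙ = ∏_{pₙ(x) = 0} pₙ₋₁(x)`.
Symmetry of the resultant gives `ℓₙ₊₁ⁿ Rₙ₊₁ = (-1)^{n(n+1)} ℓₙⁿ⁺¹ ∏_{pₙ(y) = 0} pₙ₊₁(y)`,
and at a root `y` of `pₙ` the recurrence reduces `pₙ₊₁(y)` to `-cₙ₊₁ pₙ₋₁(y)`. Hence
`aₙ₊₁ⁿ Rₙ₊₁ = (-1)ⁿ ℓₙ cₙ₊₁ⁿ Rₙ`, a recursion that the closed form satisfies as well.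
-/

open Polynomial Finset

namespace Polynomial

theorem leadingCoeff_pow_mul_prod_eval_roots_comm {R : Type*} [CommRing R] [IsDomain R]
    {f g : R[X]} (hf : f.Splits) (hg : g.Splits) :
    f.leadingCoeff ^ g.natDegree * (f.roots.map g.eval).prod =
      (-1) ^ (f.natDegree * g.natDegree) *
        (g.leadingCoeff ^ f.natDegree * (g.roots.map f.eval).prod) := by
  rw [← resultant_eq_prod_eval f g _ le_rfl hf, ← resultant_eq_prod_eval g f _ le_rfl hg,
    resultant_comm]

end Polynomial

noncomputable def schurConstant {K : Type*} [Field K] (a c : ℕ → K) (n : ℕ) : K :=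
  (-1) ^ (n * (n - 1) / 2) * ∏ j ∈ Icc 1 n, a j ^ ((n : ℤ) - 2 * j + 1) * c j ^ (j - 1)

theorem schurConstant_succ {K : Type*} [Field K] {a : ℕ → K} (c : ℕ → K)
    (ha : ∀ j, 0 < j → a j ≠ 0) (n : ℕ) :
    a (n + 1) ^ n * schurConstant a c (n + 1) =
      (-1) ^ n * (∏ j ∈ Icc 1 n, a j) * c (n + 1) ^ n * schurConstant a c n := by
  have hfactor : ∀ j ∈ Icc 1 n, a j ^ ((↑(n + 1) : ℤ) - 2 * j + 1) * c j ^ (j - 1) =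
      a j * (a j ^ ((n : ℤ) - 2 * j + 1) * c j ^ (j - 1)) := by
    intro j hj
    rw [show ((↑(n + 1) : ℤ) - 2 * j + 1) = ((n : ℤ) - 2 * j + 1) + 1 by push_cast; ring,
      zpow_add_one₀ (ha j (mem_Icc.1 hj).1)]
    ring
  have htop : a (n + 1) ^ n * a (n + 1) ^ ((↑(n + 1) : ℤ) - 2 * ↑(n + 1) + 1) = 1 := by
    rw [show ((↑(n + 1) : ℤ) - 2 * ↑(n + 1) + 1) = -n by push_cast; ring, zpow_neg,
      zpow_natCast, mul_inv_cancel₀ (pow_ne_zero _ (ha _ n.succ_pos))]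
  rw [schurConstant, schurConstant, Nat.triangle_succ, prod_Icc_succ_top (by omega),
    prod_congr rfl hfactor, prod_mul_distrib, Nat.add_sub_cancel]
  linear_combination (-1) ^ (n * (n - 1) / 2) * (-1) ^ n * (∏ j ∈ Icc 1 n, a j) *
    (∏ j ∈ Icc 1 n, a j ^ ((n : ℤ) - 2 * j + 1) * c j ^ (j - 1)) * c (n + 1) ^ n * htop

structure IsThreeTermRecurrence {R : Type*} [CommRing R] (a b c : ℕ → R) (p : ℕ → R[X]) :
    Prop where
  zero : p 0 = 1
  one : p 1 = C (a 1) * X + C (b 1)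
  add_two (m : ℕ) :
    p (m + 2) = (C (a (m + 2)) * X + C (b (m + 2))) * p (m + 1) - C (c (m + 2)) * p m

namespace IsThreeTermRecurrence

variable {R : Type*} [CommRing R] {a b c : ℕ → R} {p : ℕ → R[X]}

theorem natDegree_eq_and_leadingCoeff_eq [IsDomain R] (hp : IsThreeTermRecurrence a b c p)
    (ha : ∀ j, 0 < j → a j ≠ 0) (m : ℕ) :
    (p m).natDegree = m ∧ (p m).leadingCoeff = ∏ j ∈ Icc 1 m, a j := by
  induction m using Nat.twoStepInduction with
  | zero => simp [hp.zero]
  | one => simp [hp.one, natDegree_linear (ha 1 one_pos), leadingCoeff_linear (ha 1 one_pos)]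
  | more m ih₀ ih₁ =>
    have ha₂ : a (m + 2) ≠ 0 := ha (m + 2) (by omega)
    have hp₁ : p (m + 1) ≠ 0 := by
      rw [← leadingCoeff_ne_zero, ih₁.2]
      exact prod_ne_zero_iff.2 fun j hj => ha j (mem_Icc.1 hj).1
    have hlin : C (a (m + 2)) * X + C (b (m + 2)) ≠ 0 := by
      rw [← leadingCoeff_ne_zero, leadingCoeff_linear ha₂]; exact ha₂
    have hmain : ((C (a (m + 2)) * X + C (b (m + 2))) * p (m + 1)).natDegree = m + 2 := by
      rw [natDegree_mul hlin hp₁, natDegree_linear ha₂, ih₁.1]; omega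
    have hlow : (C (c (m + 2)) * p m).natDegree <
        ((C (a (m + 2)) * X + C (b (m + 2))) * p (m + 1)).natDegree :=
      hmain.symm ▸ (natDegree_C_mul_le _ _).trans_lt (by omega)
    rw [hp.add_two, natDegree_sub_eq_left_of_natDegree_lt hlow, hmain,
      leadingCoeff_sub_of_degree_lt (degree_lt_degree hlow), leadingCoeff_mul,
      leadingCoeff_linear ha₂, ih₁.2, prod_Icc_succ_top (show 1 ≤ m + 2 by omega) a, mul_comm]
    exact ⟨rfl, rfl⟩

theorem eval_add_two_of_isRoot (hp : IsThreeTermRecurrence a b c p) {m : ℕ} {x : R}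
    (hx : (p (m + 1)).IsRoot x) : (p (m + 2)).eval x = -c (m + 2) * (p m).eval x := by
  simp [hp.add_two, hx.eq_zero]

theorem leadingCoeff_pow_mul_prod_eval_roots_add_two [IsDomain R]
    (hp : IsThreeTermRecurrence a b c p) (ha : ∀ j, 0 < j → a j ≠ 0) (n : ℕ)
    (hs₁ : (p (n + 1)).Splits) (hs₂ : (p (n + 2)).Splits) :
    (∏ j ∈ Icc 1 (n + 2), a j) ^ (n + 1) * ((p (n + 2)).roots.map (p (n + 1)).eval).prod =
      (∏ j ∈ Icc 1 (n + 1), a j) ^ (n + 2) * (-c (n + 2)) ^ (n + 1) *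
        ((p (n + 1)).roots.map (p n).eval).prod := by
  obtain ⟨hdeg₁, hlc₁⟩ := hp.natDegree_eq_and_leadingCoeff_eq ha (n + 1)
  obtain ⟨hdeg₂, hlc₂⟩ := hp.natDegree_eq_and_leadingCoeff_eq ha (n + 2)
  have hroots : ((p (n + 1)).roots.map (p (n + 2)).eval).prod =
      (-c (n + 2)) ^ (n + 1) * ((p (n + 1)).roots.map (p n).eval).prod := by
    rw [Multiset.map_congr rfl fun x hx => hp.eval_add_two_of_isRoot (isRoot_of_mem_roots hx),
      Multiset.prod_map_mul, Multiset.map_const', Multiset.prod_replicate,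
      ← hs₁.natDegree_eq_card_roots, hdeg₁]
  have hsign : (-1 : R) ^ ((n + 2) * (n + 1)) = 1 :=
    (Nat.even_mul_pred_self (n + 2)).neg_one_pow
  have hres := leadingCoeff_pow_mul_prod_eval_roots_comm hs₂ hs₁
  rw [hdeg₁, hdeg₂, hlc₁, hlc₂, hsign, hroots] at hres
  rw [hres]
  ring

theorem prod_eval_roots_eq_schurConstant {K : Type*} [Field K]
    {a b c : ℕ → K} {p : ℕ → K[X]} (hp : IsThreeTermRecurrence a b c p)
    (ha : ∀ j, 0 < j → a j ≠ 0) (hs : ∀ m, (p m).Splits) :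
    ∀ n, ((p n).roots.map (p (n - 1)).eval).prod = schurConstant a c n
  | 0 => by simp [hp.zero, schurConstant]
  | 1 => by simp [hp.zero, schurConstant]
  | n + 2 => by
    have hA : (∏ j ∈ Icc 1 (n + 2), a j) ^ (n + 1) ≠ 0 :=
      pow_ne_zero _ (prod_ne_zero_iff.2 fun j hj => ha j (mem_Icc.1 hj).1)
    have ih := hp.prod_eval_roots_eq_schurConstant ha hs (n + 1)
    rw [Nat.add_sub_cancel] at ih
    refine mul_left_cancel₀ hA ?_
    rw [show n + 2 - 1 = n + 1 from rfl,
      hp.leadingCoeff_pow_mul_prod_eval_roots_add_two ha n (hs _) (hs _), ih,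
      prod_Icc_succ_top (by omega : 1 ≤ n + 2), mul_pow]
    linear_combination (-(∏ j ∈ Icc 1 (n + 1), a j) ^ (n + 1)) * schurConstant_succ c ha (n + 1)

end IsThreeTermRecurrence

theorem schur_resultant_general (a b c : ℕ → ℂ) (p : ℕ → ℂ[X])
    (hp0 : p 0 = 1)
    (hp1 : p 1 = C (a 1) * X + C (b 1))
    (hrec : ∀ m : ℕ, 2 ≤ m → p m = (C (a m) * X + C (b m)) * p (m - 1) - C (c m) * p (m - 2))
    (hne : ∀ m : ℕ, 1 < m → a 1 * a m * c m ≠ 0)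
    (n : ℕ) :
    ((p n).roots.map fun x => (p (n - 1)).eval x).prod =
      (-1) ^ (n * (n - 1) / 2) *
        ∏ j ∈ Finset.Icc 1 n, a j ^ ((n : ℤ) - 2 * j + 1) * c j ^ (j - 1) := by
  have hp : IsThreeTermRecurrence a b c p := ⟨hp0, hp1, fun m => hrec (m + 2) (by omega)⟩
  have ha : ∀ j, 0 < j → a j ≠ 0 := by
    intro j hj
    obtain rfl | hj := (show 1 ≤ j from hj).eq_or_lt
    · exact left_ne_zero_of_mul (left_ne_zero_of_mul (hne 2 one_lt_two))
    · exact right_ne_zero_of_mul (left_ne_zero_of_mul (hne j hj))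
  exact hp.prod_eval_roots_eq_schurConstant ha (fun m => IsAlgClosed.splits _) n

/-- Schur's theorem: for polynomials satisfying the three-term recurrence
`pₙ = (aₙ x + bₙ) pₙ₋₁ - cₙ pₙ₋₂` with `p₀ = 1`, `p₁ = a₁ x + b₁` and
`a₁ aₙ cₙ ≠ 0` for `n > 1`, the product of `pₙ₋₁` over the roots of `pₙ`
(with multiplicity) equals `(-1)^{n(n-1)/2} ∏_{j=1}^n aⱼ^{n-2j+1} cⱼ^{j-1}`. -/
theorem schur_resultant (a b c : ℕ → ℂ) (p : ℕ → ℂ[X])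
    (hp0 : p 0 = 1)
    (hp1 : p 1 = C (a 1) * X + C (b 1))
    (hrec : ∀ m : ℕ, 2 ≤ m → p m = (C (a m) * X + C (b m)) * p (m - 1) - C (c m) * p (m - 2))
    (hne : ∀ m : ℕ, 1 < m → a 1 * a m * c m ≠ 0)
    (n : ℕ) (hn : 1 ≤ n) (hroots : Multiset.card (p n).roots = n) :
    ((p n).roots.map fun x => (p (n - 1)).eval x).prod =
      (-1) ^ (n * (n - 1) / 2) *
        ∏ j ∈ Finset.Icc 1 n, a j ^ ((n : ℤ) - 2 * j + 1) * c j ^ (j - 1) :=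
  schur_resultant_general a b c p hp0 hp1 hrec hne n
end

section
/- For every n ≥ 3, the second smallest positive root ζ of U'_{2n-1}(x) (the derivative of the Chebyshev polynomial of the second kind) satisfies ζ < cos(π(n-2)/(2n)). -/
open Polynomial Polynomial.Chebyshev

lemma U_root_aux (n k : ℕ) (hn : 1 ≤ n) (hk1 : 1 ≤ k) (hk2 : k ≤ 2 * n - 1) :
    (U ℝ (2 * n - 1)).eval (Real.cos (k * Real.pi / (2 * n))) = 0 := by
  have hπ := Real.pi_pos
  have hn' : (1 : ℝ) ≤ n := by exact_mod_cast hn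
  have hk1' : (1 : ℝ) ≤ k := by exact_mod_cast hk1
  have hk2' : (k : ℝ) ≤ 2 * n - 1 := by
    have : (k : ℝ) ≤ (2 * n - 1 : ℕ) := by exact_mod_cast hk2
    push_cast [Nat.cast_sub (by omega : 1 ≤ 2 * n)] at this
    linarith
  set θ : ℝ := k * Real.pi / (2 * n) with hθ
  have h2n : (0 : ℝ) < 2 * n := by linarith
  have hθpos : 0 < θ := by positivity
  have hθlt : θ < Real.pi := by
    rw [hθ, div_lt_iff₀ h2n]
    nlinarith
  have hsin : Real.sin θ ≠ 0 :=
    ne_of_gt (Real.sin_pos_of_pos_of_lt_pi hθpos hθlt)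
  have h := U_real_cos θ (2 * n - 1)
  have hidx : ((2 * n - 1 : ℤ) + 1 : ℝ) * θ = k * Real.pi := by
    push_cast
    field_simp [hθ]
    rw [hθ]
    field_simp
    try ring
  rw [hidx] at h
  have : Real.sin (k * Real.pi) = 0 := Real.sin_nat_mul_pi k
  rw [this] at h
  exact (mul_eq_zero.mp h).resolve_right hsin

/-- For `n ≥ 3`, the second smallest positive root of `U'₂ₙ₋₁` is less than
`cos(π(n-2)/(2n))`. -/
theorem second_smallest_critical_point_bound (n : ℕ) (hn : 3 ≤ n) (ζ₁ ζ₂ : ℝ)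
    (h₁ : 0 < ζ₁ ∧ (derivative (U ℝ (2 * n - 1))).eval ζ₁ = 0)
    (h₂ : 0 < ζ₂ ∧ (derivative (U ℝ (2 * n - 1))).eval ζ₂ = 0)
    (hlt : ζ₁ < ζ₂)
    (hsecond : ∀ x : ℝ, 0 < x → (derivative (U ℝ (2 * n - 1))).eval x = 0 →
      x = ζ₁ ∨ ζ₂ ≤ x) :
    ζ₂ < Real.cos (Real.pi * ((n : ℝ) - 2) / (2 * n)) := by
  have hπ := Real.pi_pos
  have hn' : (3 : ℝ) ≤ n := by exact_mod_cast hn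
  set p : ℝ[X] := U ℝ (2 * n - 1) with hp
  -- angles
  set θ0 : ℝ := n * Real.pi / (2 * n) with hθ0
  set θ1 : ℝ := (n - 1 : ℕ) * Real.pi / (2 * n) with hθ1
  set θ2 : ℝ := (n - 2 : ℕ) * Real.pi / (2 * n) with hθ2
  have hc1 : (((n - 1 : ℕ) : ℝ)) = (n : ℝ) - 1 := by
    push_cast [Nat.cast_sub (by omega : 1 ≤ n)]; ring
  have hc2 : (((n - 2 : ℕ) : ℝ)) = (n : ℝ) - 2 := by
    push_cast [Nat.cast_sub (by omega : 2 ≤ n)]; ring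
  have h2n : (0 : ℝ) < 2 * n := by linarith
  -- roots
  have r0 : p.eval (Real.cos θ0) = 0 := U_root_aux n n (by omega) (by omega) (by omega)
  have r1 : p.eval (Real.cos θ1) = 0 := U_root_aux n (n - 1) (by omega) (by omega) (by omega)
  have r2 : p.eval (Real.cos θ2) = 0 := U_root_aux n (n - 2) (by omega) (by omega) (by omega)
  have hθ0v : θ0 = Real.pi / 2 := by rw [hθ0]; field_simp
  have hθ2θ1 : θ2 < θ1 := by
    rw [hθ1, hθ2, div_lt_div_iff₀ h2n h2n]
    have : ((n - 2 : ℕ) : ℝ) < ((n - 1 : ℕ) : ℝ) := by rw [hc1, hc2]; linarith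
    exact mul_lt_mul_of_pos_right (mul_lt_mul_of_pos_right this hπ) h2n
  have hθ1θ0 : θ1 < θ0 := by
    rw [hθ1, hθ0, div_lt_div_iff₀ h2n h2n]
    have : ((n - 1 : ℕ) : ℝ) < (n : ℝ) := by rw [hc1]; linarith
    exact mul_lt_mul_of_pos_right (mul_lt_mul_of_pos_right this hπ) h2n
  have hθ2pos : 0 < θ2 := by
    rw [hθ2]
    have : (0 : ℝ) < ((n - 2 : ℕ) : ℝ) := by rw [hc2]; linarith
    positivity
  have hθ0le : θ0 ≤ Real.pi := by rw [hθ0v]; linarith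
  -- cos ordering
  have hcos01 : Real.cos θ0 < Real.cos θ1 :=
    Real.cos_lt_cos_of_nonneg_of_le_pi (by positivity) hθ0le hθ1θ0
  have hcos12 : Real.cos θ1 < Real.cos θ2 :=
    Real.cos_lt_cos_of_nonneg_of_le_pi (le_of_lt hθ2pos) (by linarith) hθ2θ1
  have hcos0 : Real.cos θ0 = 0 := by rw [hθ0v, Real.cos_pi_div_two]
  -- Rolle twice
  have hcont : ∀ a b : ℝ, ContinuousOn (fun x => p.eval x) (Set.Icc a b) :=
    fun a b => (p.continuous_aeval).continuousOn
  obtain ⟨c₁, hc₁mem, hc₁⟩ := exists_deriv_eq_zero (f := fun x => p.eval x)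
    hcos01 (hcont _ _) (by simp only [r0, r1])
  obtain ⟨c₂, hc₂mem, hc₂⟩ := exists_deriv_eq_zero (f := fun x => p.eval x)
    hcos12 (hcont _ _) (by simp only [r1, r2])
  rw [Polynomial.deriv] at hc₁ hc₂
  have hc₁pos : 0 < c₁ := by have := hc₁mem.1; rw [hcos0] at this; exact this
  have hc₂pos : 0 < c₂ := lt_trans hc₁pos (lt_trans hc₁mem.2 hc₂mem.1)
  have hc₁c₂ : c₁ < c₂ := lt_trans hc₁mem.2 hc₂mem.1
  have hgoal : Real.cos θ2 = Real.cos (Real.pi * ((n : ℝ) - 2) / (2 * n)) := by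
    rw [hθ2, hc2]; ring_nf
  rcases hsecond c₂ hc₂pos hc₂ with h | h
  · rcases hsecond c₁ hc₁pos hc₁ with h' | h'
    · exact absurd (h'.trans h.symm) (ne_of_lt hc₁c₂)
    · linarith
  · rw [← hgoal]; exact lt_of_le_of_lt h hc₂mem.2
end

section
/- For every n ≥ 1 and real z, (1/2) ∫_{-z}^{z} U'_{2n-1}(t) (x - t^2) dt = (x - z^2) U_{2n-1}(z) + T_{2n+1}(z)/(2n+1) + T_{2n-1}(z)/(2n-1), for any real parameter x. -/
/-!
For an odd index `m`, the polynomial `P = (x - X²) U_m + T_{m+2}/(m+2) + T_m/m` is an odd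
antiderivative of `(x - X²) U_m'`: the product rule contributes `-2X U_m`, which is cancelled
because `T_k' = k U_{k-1}` and `U_{m+1} + U_{m-1} = 2X U_m`. Hence the integral over `[-z, z]`
is `P(z) - P(-z) = 2 P(z)`.
-/

open Polynomial Polynomial.Chebyshev

theorem Polynomial.Chebyshev.U_eval_neg_int {R : Type*} [CommRing R] (n : ℤ) (x : R) :
    (U R n).eval (-x) = n.negOnePow * (U R n).eval x := by
  induction n using Chebyshev.induct with
  | zero => simp
  | one => simp
  | add_two n ih1 ih2 =>
    simp only [U_add_two, eval_sub, eval_mul, eval_ofNat, eval_X, ih1, ih2, Int.negOnePow_add,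
      Int.negOnePow_one, Int.negOnePow_even 2 even_two]
    push_cast; ring
  | neg_add_one n ih1 ih2 =>
    simp only [U_sub_one, eval_sub, eval_mul, eval_ofNat, eval_X, ih1, ih2, Int.negOnePow_add,
      Int.negOnePow_sub, Int.negOnePow_one]
    push_cast; ring

section Antiderivative

variable {K : Type*} [Field K]

theorem derivative_T_div_add_T_div (m : ℤ) (hm : (m : K) ≠ 0) (hm₂ : (m : K) + 2 ≠ 0) :
    derivative (C ((m : K) + 2)⁻¹ * T K (m + 2) + C (m : K)⁻¹ * T K m) = 2 * X * U K m := by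
  simp only [derivative_add, derivative_C_mul, T_derivative_eq_U]
  rw [← C_eq_intCast, ← C_eq_intCast, ← mul_assoc, ← mul_assoc, ← Polynomial.C_mul,
    ← Polynomial.C_mul, Int.cast_add, Int.cast_ofNat, inv_mul_cancel₀ hm₂, inv_mul_cancel₀ hm,
    map_one, one_mul, one_mul, add_sub_assoc, show (2 : ℤ) - 1 = 1 by norm_num, U_add_one]
  ring

noncomputable def chebyshevAntiderivative (x : K) (m : ℤ) : K[X] :=
  (C x - X ^ 2) * U K m + (C ((m : K) + 2)⁻¹ * T K (m + 2) + C (m : K)⁻¹ * T K m)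

theorem derivative_chebyshevAntiderivative (x : K) (m : ℤ) (hm : (m : K) ≠ 0)
    (hm₂ : (m : K) + 2 ≠ 0) :
    derivative (chebyshevAntiderivative x m) = (C x - X ^ 2) * derivative (U K m) := by
  rw [chebyshevAntiderivative, derivative_add, derivative_T_div_add_T_div m hm hm₂,
    derivative_mul, derivative_sub, derivative_C, derivative_X_pow, Nat.cast_ofNat,
    Polynomial.C_ofNat]
  ring

theorem chebyshevAntiderivative_eval_neg (x z : K) {m : ℤ} (hm : Odd m) :
    (chebyshevAntiderivative x m).eval (-z) = -(chebyshevAntiderivative x m).eval z := by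
  simp only [chebyshevAntiderivative, eval_add, eval_mul, eval_sub, eval_pow, eval_C, eval_X,
    T_eval_neg, U_eval_neg_int, Int.negOnePow_odd m hm,
    Int.negOnePow_odd (m + 2) (hm.add_even even_two)]
  push_cast
  ring

end Antiderivative

theorem integral_derivative_U_mul_eq (x z : ℝ) {m : ℤ} (hm : Odd m) :
    (1 / 2) * ∫ t in (-z)..z, (derivative (U ℝ m)).eval t * (x - t ^ 2) =
      (chebyshevAntiderivative x m).eval z := by
  set P := chebyshevAntiderivative x m
  obtain ⟨hm₀, hm₂⟩ : m ≠ 0 ∧ m + 2 ≠ 0 := by obtain ⟨k, rfl⟩ := hm; omega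
  have hP : ∀ t, (derivative (U ℝ m)).eval t * (x - t ^ 2) = (derivative P).eval t := fun t ↦ by
    rw [derivative_chebyshevAntiderivative x m (by exact_mod_cast hm₀) (by exact_mod_cast hm₂)]
    simp only [eval_mul, eval_sub, eval_C, eval_pow, eval_X]
    ring
  simp_rw [hP]
  rw [intervalIntegral.integral_eq_sub_of_hasDerivAt (fun t _ ↦ P.hasDerivAt t)
    ((derivative P).continuous.intervalIntegrable _ _), chebyshevAntiderivative_eval_neg x z hm]
  ring

theorem integral_transform_formula_general (n : ℕ) (x z : ℝ) :
    (1 / 2) * ∫ t in (-z)..z, (derivative (U ℝ (2 * n - 1))).eval t * (x - t ^ 2) =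
      (x - z ^ 2) * (U ℝ (2 * n - 1)).eval z +
        (T ℝ (2 * n + 1)).eval z / (2 * (n : ℝ) + 1) +
        (T ℝ (2 * n - 1)).eval z / (2 * (n : ℝ) - 1) := by
  rw [integral_derivative_U_mul_eq x z ⟨n - 1, by ring⟩, chebyshevAntiderivative,
    show 2 * (n : ℤ) - 1 + 2 = 2 * n + 1 by ring]
  simp only [eval_add, eval_mul, eval_sub, eval_pow, eval_C, eval_X]
  push_cast
  ring

/-- `(1/2) ∫_{-z}^{z} U'₂ₙ₋₁(t)(x - t²) dt
  = (x - z²) U₂ₙ₋₁(z) + T₂ₙ₊₁(z)/(2n+1) + T₂ₙ₋₁(z)/(2n-1)`. -/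
theorem integral_transform_formula (n : ℕ) (hn : 1 ≤ n) (x z : ℝ) :
    (1 / 2) * ∫ t in (-z)..z, (derivative (U ℝ (2 * n - 1))).eval t * (x - t ^ 2) =
      (x - z ^ 2) * (U ℝ (2 * n - 1)).eval z +
        (T ℝ (2 * n + 1)).eval z / (2 * (n : ℝ) + 1) +
        (T ℝ (2 * n - 1)).eval z / (2 * (n : ℝ) - 1) :=
  integral_transform_formula_general n x z
end
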